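/- arXiv:1903.06432 — 2 statements merged into one kernel-verified Lean document; each statement's English description precedes it below -/
import Mathlib

section
/- Let φ : ℝ^m → ℝ^n be a smooth map whose Laplacian Δφ is a constant vector, and suppose the Dirichlet energy ∫_{ℝ^m} |dφ|² dx is finite. Then Δφ = 0, i.e. φ is harmonic. -/
open MeasureTheory

/-- The partial derivative in the `i`-th coordinate direction. -/
noncomputable def pd {m : ℕ} {E : Type*} [NormedAddCommGroup E] [NormedSpace ℝ E]
    (i : Fin m) (f : (Fin m → ℝ) → E) (x : Fin m → ℝ) : E :=
  fderiv ℝ f x (Pi.single i 1)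

/-- Euclidean inner product on `Fin n → ℝ`. -/
def dot {n : ℕ} (v w : Fin n → ℝ) : ℝ := ∑ α, v α * w α
/-- The componentwise Euclidean Laplacian `Δ = ∑ᵢ ∂ᵢ²`. -/
noncomputable def lap {m n : ℕ} (f : (Fin m → ℝ) → Fin n → ℝ) :
    (Fin m → ℝ) → Fin n → ℝ :=
  fun x => ∑ i, pd i (pd i f) x

theorem hinf1 : ((⊤:ℕ∞) : WithTop ℕ∞) ≠ 0 := by simp

theorem hinfp : ((⊤:ℕ∞) : WithTop ℕ∞) + 1 ≤ ((⊤:ℕ∞) : WithTop ℕ∞) := by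
  rw [ENat.coe_top_add_one]

theorem pd_smooth {m : ℕ} {E : Type*} [NormedAddCommGroup E] [NormedSpace ℝ E]
    (i : Fin m) {f : (Fin m → ℝ) → E} (hf : ContDiff ℝ ((⊤:ℕ∞) : WithTop ℕ∞) f) :
    ContDiff ℝ ((⊤:ℕ∞) : WithTop ℕ∞) (pd i f) := by
  unfold pd
  exact (ContinuousLinearMap.apply ℝ E (Pi.single i 1)).contDiff.comp
    (hf.fderiv_right hinfp)

theorem pd_cont {m : ℕ} (i : Fin m) {g : (Fin m → ℝ) → ℝ}
    (hg : ContDiff ℝ ((⊤:ℕ∞) : WithTop ℕ∞) g) :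
    Continuous (pd i g) := (pd_smooth i hg).continuous

theorem pd_hcs {m : ℕ} (i : Fin m) {g : (Fin m → ℝ) → ℝ} (hgc : HasCompactSupport g) :
    HasCompactSupport (pd i g) :=
  hgc.fderiv_apply ℝ (Pi.single i 1)

theorem integral_pd_mul {m : ℕ} (i : Fin m) {v χ : (Fin m → ℝ) → ℝ}
    (hv : ContDiff ℝ ((⊤:ℕ∞) : WithTop ℕ∞) v)
    (hχ : ContDiff ℝ ((⊤:ℕ∞) : WithTop ℕ∞) χ) (hχc : HasCompactSupport χ) :
    ∫ x, pd i v x * χ x = - ∫ x, v x * pd i χ x := by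
  have h1 : Integrable (fun x => pd i v x * χ x) :=
    ((pd_cont i hv).mul hχ.continuous).integrable_of_hasCompactSupport hχc.mul_left
  have h2 : Integrable (fun x => v x * pd i χ x) :=
    (hv.continuous.mul (pd_cont i hχ)).integrable_of_hasCompactSupport
      (pd_hcs i hχc).mul_left
  have h3 : Integrable (fun x => v x * χ x) :=
    (hv.continuous.mul hχ.continuous).integrable_of_hasCompactSupport hχc.mul_left
  have := integral_mul_fderiv_eq_neg_fderiv_mul_of_integrable h1 h2 h3
    (fun x _ => hv.differentiable hinf1 x) (fun x _ => hχ.differentiable hinf1 x)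
  unfold pd
  unfold pd at this
  linarith [this]

theorem key_bound {m : ℕ} {u : (Fin m → ℝ) → ℝ}
    (hu : ContDiff ℝ ((⊤:ℕ∞) : WithTop ℕ∞) u)
    {a E0 : ℝ} (ha : 0 ≤ a) (hE0 : 0 ≤ E0)
    (hlap : ∀ x, ∑ i, pd i (pd i u) x = a)
    (hv2 : ∀ i : Fin m, Integrable (fun x => (pd i u x)^2))
    (hvE : ∀ i : Fin m, ∫ x, (pd i u x)^2 ≤ E0) : a ≤ 0 := by
  -- the bump function
  set b : ContDiffBump (0 : Fin m → ℝ) := ⟨1, 2, one_pos, one_lt_two⟩ with hbdef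
  have hbC : ContDiff ℝ ((⊤:ℕ∞) : WithTop ℕ∞) (⇑b) := b.contDiff
  obtain ⟨C, hC⟩ := (b.hasCompactSupport.fderiv ℝ).exists_bound_of_continuous
    ((hbC.fderiv_right hinfp).continuous)
  have hC0 : 0 ≤ C := le_trans (norm_nonneg _) (hC 0)
  have main : ∀ R : ℝ, 1 ≤ R →
      a * (2*R)^m ≤ (m : ℝ) * ((C/R) * ((2*(2*R))^m/2 + E0/2)) := by
    intro R hR
    have hRpos : (0:ℝ) < R := lt_of_lt_of_le one_pos hR
    have hRne : R ≠ 0 := ne_of_gt hRpos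
    set χ : (Fin m → ℝ) → ℝ := fun x => b (R⁻¹ • x) with hχdef
    have hχ : ContDiff ℝ ((⊤:ℕ∞) : WithTop ℕ∞) χ :=
      hbC.comp (contDiff_const_smul R⁻¹)
    have hχc : HasCompactSupport χ :=
      b.hasCompactSupport.comp_homeomorph (Homeomorph.smulOfNeZero (R⁻¹) (inv_ne_zero hRne))
    have hχint : Integrable χ := hχ.continuous.integrable_of_hasCompactSupport hχc
    -- lower bound for ∫ χ
    have hLχ : (2*R)^m ≤ ∫ x, χ x := by
      have hind : ∫ x, Set.indicator (Metric.closedBall (0: Fin m → ℝ) R)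
          (1 : (Fin m → ℝ) → ℝ) x = (2*R)^m := by
        rw [integral_indicator_one measurableSet_closedBall, Measure.real,
          Real.volume_pi_closedBall 0 (le_of_lt hRpos),
          ENNReal.toReal_ofReal (by positivity), Fintype.card_fin]
      rw [← hind]
      refine integral_mono ((integrable_indicator_iff measurableSet_closedBall).2
        (integrableOn_const (isCompact_closedBall _ _).measure_lt_top.ne)) hχint ?_
      intro x
      by_cases hx : x ∈ Metric.closedBall (0 : Fin m → ℝ) R
      · rw [Set.indicator_of_mem hx]
        refine le_of_eq (b.one_of_mem_closedBall ?_).symm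
        rw [Metric.mem_closedBall, dist_zero_right] at hx ⊢
        rw [norm_smul, norm_inv, Real.norm_eq_abs, abs_of_pos hRpos]
        show R⁻¹ * ‖x‖ ≤ 1
        rw [inv_mul_le_iff₀ hRpos, mul_one]
        exact hx
      · rw [Set.indicator_of_notMem hx]
        exact b.nonneg
    -- pointwise derivative facts for χ
    have hpd : ∀ (i : Fin m) (x : Fin m → ℝ),
        pd i χ x = R⁻¹ * (fderiv ℝ (⇑b) (R⁻¹ • x) (Pi.single i 1)) := by
      intro i x
      have h1 : HasFDerivAt (fun y : Fin m → ℝ => R⁻¹ • y)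
          (R⁻¹ • ContinuousLinearMap.id ℝ (Fin m → ℝ)) x :=
        (hasFDerivAt_id x).const_smul R⁻¹
      have h2 : HasFDerivAt (⇑b) (fderiv ℝ (⇑b) (R⁻¹ • x)) (R⁻¹ • x) :=
        (hbC.differentiable hinf1 (R⁻¹ • x)).hasFDerivAt
      have h3 : HasFDerivAt χ
          ((fderiv ℝ (⇑b) (R⁻¹ • x)).comp (R⁻¹ • ContinuousLinearMap.id ℝ (Fin m → ℝ))) x :=
        h2.comp x h1
      rw [pd, h3.fderiv]
      simp only [ContinuousLinearMap.coe_comp', Function.comp_apply,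
        ContinuousLinearMap.smul_apply, ContinuousLinearMap.coe_id', id_eq,
        _root_.map_smul, smul_eq_mul]
    have hpd_bound : ∀ (i : Fin m) (x : Fin m → ℝ), |pd i χ x| ≤ C / R := by
      intro i x
      rw [hpd i x, abs_mul, abs_inv, abs_of_pos hRpos, div_eq_inv_mul]
      refine mul_le_mul_of_nonneg_left ?_ (by positivity)
      calc |fderiv ℝ (⇑b) (R⁻¹ • x) (Pi.single i 1)|
          ≤ ‖fderiv ℝ (⇑b) (R⁻¹ • x)‖ * ‖(Pi.single i 1 : Fin m → ℝ)‖ :=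
            (fderiv ℝ (⇑b) (R⁻¹ • x)).le_opNorm _
        _ ≤ C * 1 := by
            refine mul_le_mul (hC _) ?_ (norm_nonneg _) hC0
            rw [Pi.norm_single, norm_one]
        _ = C := mul_one C
    have hpd_zero : ∀ (i : Fin m) (x : Fin m → ℝ),
        x ∉ Metric.closedBall (0 : Fin m → ℝ) (2*R) → pd i χ x = 0 := by
      intro i x hx
      rw [Metric.mem_closedBall, dist_zero_right, not_le] at hx
      have hopen : IsOpen {y : Fin m → ℝ | 2*R < ‖y‖} :=
        isOpen_lt continuous_const continuous_norm
      have hev : χ =ᶠ[nhds x] (fun _ => (0:ℝ)) := by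
        refine Filter.eventually_of_mem (hopen.mem_nhds hx) ?_
        intro y hy
        refine b.zero_of_le_dist ?_
        rw [dist_zero_right, norm_smul, norm_inv, Real.norm_eq_abs, abs_of_pos hRpos]
        show (2:ℝ) ≤ R⁻¹ * ‖y‖
        rw [inv_mul_eq_div, le_div_iff₀ hRpos]
        exact le_of_lt hy
      rw [pd, hev.fderiv_eq, fderiv_const_apply]
      rfl
    -- integration by parts
    have hIBP : a * ∫ x, χ x = ∑ i : Fin m, -∫ x, pd i u x * pd i χ x := by
      have h1 : a * ∫ x, χ x = ∫ x, a * χ x := (integral_const_mul a χ).symm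
      have h2 : ∀ x, a * χ x = ∑ i : Fin m, pd i (pd i u) x * χ x := by
        intro x
        rw [← hlap x, Finset.sum_mul]
      have hInt : ∀ i : Fin m, Integrable (fun x => pd i (pd i u) x * χ x) := by
        intro i
        exact ((pd_cont i (pd_smooth i hu)).mul
          hχ.continuous).integrable_of_hasCompactSupport hχc.mul_left
      rw [h1, integral_congr_ae (Filter.Eventually.of_forall h2),
        integral_finset_sum _ (fun i _ => hInt i)]
      refine Finset.sum_congr rfl fun i _ => ?_
      exact integral_pd_mul i (pd_smooth i hu) hχ hχc
    -- estimate each term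
    have hterm : ∀ i : Fin m,
        -∫ x, pd i u x * pd i χ x ≤ (C/R) * ((2*(2*R))^m/2 + E0/2) := by
      intro i
      set s : Set (Fin m → ℝ) := Metric.closedBall (0 : Fin m → ℝ) (2*R) with hs
      set g : (Fin m → ℝ) → ℝ :=
        Set.indicator s (fun x => (C/R) * (1/2 + (pd i u x)^2/2)) with hg
      have hpt : ∀ x, |pd i u x * pd i χ x| ≤ g x := by
        intro x
        by_cases hx : x ∈ s
        · rw [hg, Set.indicator_of_mem hx, abs_mul]
          have h1 : |pd i u x| ≤ 1/2 + (pd i u x)^2/2 := by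
            nlinarith [sq_nonneg (|pd i u x| - 1), sq_abs (pd i u x)]
          calc |pd i u x| * |pd i χ x| ≤ (1/2 + (pd i u x)^2/2) * (C/R) :=
                mul_le_mul h1 (hpd_bound i x) (abs_nonneg _) (by positivity)
            _ = (C/R) * (1/2 + (pd i u x)^2/2) := mul_comm _ _
        · rw [hg, Set.indicator_of_notMem hx, hpd_zero i x hx, mul_zero, abs_zero]
      have hion : IntegrableOn (fun x => (C/R) * (1/2 + (pd i u x)^2/2)) s := by
        have h1 : IntegrableOn (fun _ : Fin m → ℝ => (1:ℝ)/2) s :=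
          integrableOn_const (isCompact_closedBall _ _).measure_lt_top.ne
        have h2 : IntegrableOn (fun x => (pd i u x)^2/2) s :=
          (hv2 i).integrableOn.div_const 2
        exact (h1.add h2).const_mul (C/R)
      have hgint : Integrable g := by
        rw [hg, integrable_indicator_iff measurableSet_closedBall]
        exact hion
      have hfint : Integrable (fun x => pd i u x * pd i χ x) :=
        ((pd_cont i hu).mul (pd_cont i hχ)).integrable_of_hasCompactSupport
          (pd_hcs i hχc).mul_left
      have hsle : ∫ x in s, (pd i u x)^2 ≤ E0 :=
        le_trans (setIntegral_le_integral (hv2 i)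
          (Filter.Eventually.of_forall fun x => sq_nonneg _)) (hvE i)
      have hvol : (volume s).toReal = (2*(2*R))^m := by
        rw [hs, Real.volume_pi_closedBall 0 (by positivity),
          ENNReal.toReal_ofReal (by positivity), Fintype.card_fin]
      have hgval : ∫ x, g x
          = (C/R) * ((2*(2*R))^m * (1/2) + (∫ x in s, (pd i u x)^2)/2) := by
        rw [hg, integral_indicator measurableSet_closedBall]
        rw [integral_const_mul]
        congr 1
        rw [integral_add (integrableOn_const (C := (1:ℝ)/2)
            (isCompact_closedBall _ _).measure_lt_top.ne)
          ((hv2 i).integrableOn.div_const 2)]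
        rw [setIntegral_const, Measure.real, smul_eq_mul, hvol, integral_div]
      have habs : |∫ x, pd i u x * pd i χ x| ≤ ∫ x, |pd i u x * pd i χ x| := by
        simpa only [Real.norm_eq_abs] using
          norm_integral_le_integral_norm (fun x => pd i u x * pd i χ x)
      calc -∫ x, pd i u x * pd i χ x ≤ |∫ x, pd i u x * pd i χ x| := neg_le_abs _
        _ ≤ ∫ x, |pd i u x * pd i χ x| := habs
        _ ≤ ∫ x, g x := integral_mono hfint.abs hgint hpt
        _ = (C/R) * ((2*(2*R))^m * (1/2) + (∫ x in s, (pd i u x)^2)/2) := hgval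
        _ ≤ (C/R) * ((2*(2*R))^m/2 + E0/2) := by
            refine mul_le_mul_of_nonneg_left ?_ (by positivity)
            linarith
    calc a * (2*R)^m ≤ a * ∫ x, χ x := mul_le_mul_of_nonneg_left hLχ ha
      _ = ∑ i : Fin m, -∫ x, pd i u x * pd i χ x := hIBP
      _ ≤ ∑ _i : Fin m, (C/R) * ((2*(2*R))^m/2 + E0/2) :=
          Finset.sum_le_sum fun i _ => hterm i
      _ = (m : ℝ) * ((C/R) * ((2*(2*R))^m/2 + E0/2)) := by
          rw [Finset.sum_const, Finset.card_univ, Fintype.card_fin, nsmul_eq_mul]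
  -- conclude
  set K : ℝ := (m:ℝ) * C * (2^m + E0) / 2 with hK
  have hK0 : 0 ≤ K := by positivity
  have hles : ∀ R : ℝ, 1 ≤ R → a ≤ K / R := by
    intro R hR
    have hRpos : (0:ℝ) < R := lt_of_lt_of_le one_pos hR
    have h2R : (1:ℝ) ≤ (2*R)^m := one_le_pow₀ (by linarith)
    have hstep : (m : ℝ) * ((C/R) * ((2*(2*R))^m/2 + E0/2)) ≤ (K/R) * (2*R)^m := by
      have hlhs : (m : ℝ) * ((C/R) * ((2*(2*R))^m/2 + E0/2))
          = ((m:ℝ)*C*(2^m*(2*R)^m + E0)/2)/R := by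
        rw [mul_pow]
        field_simp
      have hrhs : (K/R) * (2*R)^m = ((m:ℝ)*C*((2^m + E0)*(2*R)^m)/2)/R := by
        rw [hK]
        field_simp
      rw [hlhs, hrhs, div_le_div_iff_of_pos_right hRpos]
      have h1 : 0 ≤ (m:ℝ)*C*E0 := by positivity
      nlinarith [h1, h2R]
    have hfin := le_trans (main R hR) hstep
    exact le_of_mul_le_mul_right hfin (by positivity)
  by_contra hcon
  push_neg at hcon
  have hR1 : (1:ℝ) ≤ K/a + 1 := le_add_of_nonneg_left (by positivity)
  have h := hles (K/a + 1) hR1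
  have hRpos' : (0:ℝ) < K/a + 1 := lt_of_lt_of_le one_pos hR1
  rw [le_div_iff₀ hRpos'] at h
  rw [mul_add, mul_one, mul_comm a (K/a), div_mul_cancel₀ K (ne_of_gt hcon)] at h
  linarith
theorem pd_clm {m n : ℕ} (i : Fin m) (L : (Fin n → ℝ) →L[ℝ] ℝ)
    {f : (Fin m → ℝ) → Fin n → ℝ} (hf : Differentiable ℝ f) (x : Fin m → ℝ) :
    pd i (fun y => L (f y)) x = L (pd i f x) := by
  unfold pd
  rw [show (fun y => L (f y)) = (⇑L) ∘ f from rfl,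
    (L.hasFDerivAt.comp x (hf x).hasFDerivAt).fderiv]
  rfl

/-- If `φ : ℝ^m → ℝ^n` is smooth, `Δφ` is a constant vector, and the Dirichlet energy
`∫ |dφ|²` is finite, then `Δφ = 0`, i.e. `φ` is harmonic. -/
theorem harmonic_of_const_laplacian_finite_energy {m n : ℕ}
    (φ : (Fin m → ℝ) → Fin n → ℝ) (hφ : ContDiff ℝ (⊤ : ℕ∞) φ)
    (c : Fin n → ℝ) (hc : ∀ x, lap φ x = c)
    (hE : Integrable (fun x => ∑ i, ∑ α, (pd i φ x α) ^ 2)) :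
    ∀ x, lap φ x = 0 := by
  have hφ' : ContDiff ℝ ((⊤:ℕ∞) : WithTop ℕ∞) φ := hφ.of_le (by simp)
  set L : (Fin n → ℝ) →L[ℝ] ℝ := ∑ α, c α • ContinuousLinearMap.proj α with hL
  have hLapp : ∀ y : Fin n → ℝ, L y = ∑ α, c α * y α := by
    intro y
    rw [hL]
    simp [ContinuousLinearMap.sum_apply, ContinuousLinearMap.smul_apply,
      ContinuousLinearMap.proj_apply, smul_eq_mul]
  set u : (Fin m → ℝ) → ℝ := fun x => L (φ x) with hu
  have huC : ContDiff ℝ ((⊤:ℕ∞) : WithTop ℕ∞) u := L.contDiff.comp hφ'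
  have hφd : Differentiable ℝ φ := hφ'.differentiable hinf1
  have hpdu : ∀ i : Fin m, pd i u = fun x => L (pd i φ x) :=
    fun i => funext fun x => pd_clm i L hφd x
  have hpd2 : ∀ (i : Fin m) (x : Fin m → ℝ), pd i (pd i u) x = L (pd i (pd i φ) x) := by
    intro i x
    rw [hpdu i]
    exact pd_clm i L ((pd_smooth i hφ').differentiable hinf1) x
  set a : ℝ := ∑ α, (c α)^2 with hadef
  have ha0 : 0 ≤ a := Finset.sum_nonneg fun α _ => sq_nonneg _
  have hlapu : ∀ x, ∑ i, pd i (pd i u) x = a := by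
    intro x
    have h1 : ∑ i : Fin m, pd i (pd i u) x = L (∑ i, pd i (pd i φ) x) := by
      rw [map_sum]
      exact Finset.sum_congr rfl fun i _ => hpd2 i x
    have h2 : (∑ i : Fin m, pd i (pd i φ) x) = c := hc x
    rw [h1, h2, hLapp]
    exact Finset.sum_congr rfl fun α _ => (sq (c α)).symm
  have hbdd : ∀ (i : Fin m) (x : Fin m → ℝ),
      (pd i u x)^2 ≤ a * ∑ j, ∑ α, (pd j φ x α)^2 := by
    intro i x
    have h1 : pd i u x = ∑ α, c α * pd i φ x α := by rw [hpdu i]; exact hLapp _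
    rw [h1]
    refine le_trans (Finset.sum_mul_sq_le_sq_mul_sq Finset.univ c (fun α => pd i φ x α)) ?_
    rw [← hadef]
    refine mul_le_mul_of_nonneg_left ?_ ha0
    exact Finset.single_le_sum (f := fun j => ∑ α, (pd j φ x α)^2)
      (fun j _ => Finset.sum_nonneg fun α _ => sq_nonneg _) (Finset.mem_univ i)
  have hv2 : ∀ i : Fin m, Integrable (fun x => (pd i u x)^2) := by
    intro i
    refine Integrable.mono' (hE.const_mul a) ((pd_cont i huC).pow 2).aestronglyMeasurable ?_
    refine Filter.Eventually.of_forall fun x => ?_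
    rw [Real.norm_eq_abs, abs_of_nonneg (sq_nonneg _)]
    exact hbdd i x
  have hvE : ∀ i : Fin m, ∫ x, (pd i u x)^2 ≤ a * ∫ x, ∑ j, ∑ α, (pd j φ x α)^2 := by
    intro i
    rw [← integral_const_mul]
    exact integral_mono (hv2 i) (hE.const_mul a) (hbdd i)
  have hE0nn : 0 ≤ a * ∫ x, ∑ j, ∑ α, (pd j φ x α)^2 := by
    refine mul_nonneg ha0 (integral_nonneg fun x => ?_)
    exact Finset.sum_nonneg fun j _ => Finset.sum_nonneg fun α _ => sq_nonneg _
  have hker : a ≤ 0 := key_bound huC ha0 hE0nn hlapu hv2 hvE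
  have haz : a = 0 := le_antisymm hker ha0
  have hcz : c = 0 := by
    funext α
    have hsum : (∑ β, (c β)^2) = 0 := by rw [← hadef]; exact haz
    have h := (Finset.sum_eq_zero_iff_of_nonneg
      (fun β _ => sq_nonneg (c β))).1 hsum α (Finset.mem_univ α)
    simpa using pow_eq_zero_iff (two_ne_zero) |>.mp h
  intro x
  rw [hc x, hcz]
end

section
/- Let φ : ℝ^m → ℝ^n be smooth with Δ³φ = 0 (triharmonic with flat target), and assume ∫_{ℝ^m} (|dφ|² + |∇dφ|² + |∇²dφ|²) dx < ∞, where ∇dφ and ∇²dφ denote the full second and third partial derivatives of φ. If m ≠ 6, then φ is harmonic, i.e. Δφ = 0. -/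
open MeasureTheory
open scoped ContDiff

section Infra

variable {m : ℕ}

variable {m : ℕ}

theorem pd_contDiff {E : Type*} [NormedAddCommGroup E] [NormedSpace ℝ E]
    (i : Fin m) {f : (Fin m → ℝ) → E} (hf : ContDiff ℝ ∞ f) :
    ContDiff ℝ ∞ (pd i f) :=
  ((hf.fderiv_right (le_refl _)).clm_apply contDiff_const)

theorem pd_diff {E : Type*} [NormedAddCommGroup E] [NormedSpace ℝ E]
    (i : Fin m) {f : (Fin m → ℝ) → E} (hf : ContDiff ℝ ∞ f) :
    Differentiable ℝ (pd i f) :=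
  (pd_contDiff i hf).differentiable (by norm_num)

theorem pd_cont_s7 {E : Type*} [NormedAddCommGroup E] [NormedSpace ℝ E]
    (i : Fin m) {f : (Fin m → ℝ) → E} (hf : ContDiff ℝ ∞ f) :
    Continuous (pd i f) :=
  (pd_contDiff i hf).continuous

theorem pd_compactSupport {E : Type*} [NormedAddCommGroup E] [NormedSpace ℝ E]
    (i : Fin m) {f : (Fin m → ℝ) → E} (hf : HasCompactSupport f) :
    HasCompactSupport (pd i f) :=
  hf.fderiv_apply ℝ (Pi.single i 1)

theorem pd_mul (i : Fin m) {f g : (Fin m → ℝ) → ℝ} (hf : Differentiable ℝ f)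
    (hg : Differentiable ℝ g) :
    pd i (fun x => f x * g x) = fun x => pd i f x * g x + f x * pd i g x := by
  funext x
  simp only [pd]
  rw [fderiv_fun_mul (hf x) (hg x)]
  simp only [ContinuousLinearMap.add_apply, ContinuousLinearMap.smul_apply, smul_eq_mul]
  ring

theorem pd_add (i : Fin m) {f g : (Fin m → ℝ) → ℝ} (hf : Differentiable ℝ f)
    (hg : Differentiable ℝ g) :
    pd i (fun x => f x + g x) = fun x => pd i f x + pd i g x := by
  funext x
  simp only [pd]
  rw [fderiv_fun_add (hf x) (hg x)]
  rfl

theorem pd_const_mul (i : Fin m) {f : (Fin m → ℝ) → ℝ} (hf : Differentiable ℝ f) (c : ℝ) :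
    pd i (fun x => c * f x) = fun x => c * pd i f x := by
  funext x
  simp only [pd]
  rw [fderiv_const_mul (hf x)]
  rfl

theorem pd_sum {κ : Type*} (s : Finset κ) (i : Fin m) {f : κ → (Fin m → ℝ) → ℝ}
    (hf : ∀ j, Differentiable ℝ (f j)) :
    pd i (fun x => ∑ j ∈ s, f j x) = fun x => ∑ j ∈ s, pd i (f j) x := by
  funext x
  simp only [pd]
  rw [fderiv_fun_sum (fun j _ => (hf j).differentiableAt)]
  simp [ContinuousLinearMap.sum_apply]

theorem pd_comp_smul (i : Fin m) {f : (Fin m → ℝ) → ℝ} (hf : Differentiable ℝ f) (c : ℝ)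
    (x : Fin m → ℝ) :
    pd i (fun y => f (c • y)) x = c * pd i f (c • x) := by
  have h1 : (fun y => f (c • y)) = f ∘ (fun y : Fin m → ℝ => c • y) := rfl
  have hL : Differentiable ℝ (fun y : Fin m → ℝ => c • y) := (differentiable_id.const_smul c)
  simp only [pd, h1]
  rw [fderiv_comp x (hf _) (hL x)]
  have h2 : fderiv ℝ (fun y : Fin m → ℝ => c • y) x = c • ContinuousLinearMap.id ℝ (Fin m → ℝ) := by
    rw [fderiv_fun_const_smul differentiableAt_fun_id, fderiv_fun_id]
  rw [h2]
  simp [_root_.map_smul]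

/-- IBP on ℝ^m: one factor smooth with compact support. -/
theorem ibp (i : Fin m) {f g : (Fin m → ℝ) → ℝ} (hf : ContDiff ℝ ∞ f) (hg : ContDiff ℝ ∞ g)
    (hcs : HasCompactSupport f) :
    ∫ x, f x * pd i g x = -∫ x, pd i f x * g x := by
  have h1 : Integrable (fun x => f x * pd i g x) :=
    (hf.continuous.mul (pd_cont_s7 i hg)).integrable_of_hasCompactSupport (hcs.mul_right)
  have h2 : Integrable (fun x => pd i f x * g x) :=
    ((pd_cont_s7 i hf).mul hg.continuous).integrable_of_hasCompactSupport
      ((pd_compactSupport i hcs).mul_right)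
  have h3 : Integrable (fun x => f x * g x) :=
    (hf.continuous.mul hg.continuous).integrable_of_hasCompactSupport (hcs.mul_right)
  simpa only [pd] using
    integral_mul_fderiv_eq_neg_fderiv_mul_of_integrable h2 h1 h3
      (fun x _ => hf.differentiable (by norm_num) x) (fun x _ => hg.differentiable (by norm_num) x)

/-! ### The cutoff function -/

noncomputable def bmp (m : ℕ) : ContDiffBump (0 : Fin m → ℝ) := ⟨1, 2, one_pos, one_lt_two⟩
noncomputable def eta (m : ℕ) : (Fin m → ℝ) → ℝ := fun x => bmp m x

theorem eta_contDiff : ContDiff ℝ ∞ (eta m) := (bmp m).contDiff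
theorem eta_diff : Differentiable ℝ (eta m) := eta_contDiff.differentiable (by norm_num)
theorem eta_nonneg (x : Fin m → ℝ) : 0 ≤ eta m x := (bmp m).nonneg
theorem eta_le_one (x : Fin m → ℝ) : eta m x ≤ 1 := (bmp m).le_one
theorem eta_compactSupport : HasCompactSupport (eta m) := (bmp m).hasCompactSupport
theorem eta_one {x : Fin m → ℝ} (hx : ‖x‖ ≤ 1) : eta m x = 1 :=
  (bmp m).one_of_mem_closedBall (by simpa [bmp, Metric.mem_closedBall, dist_zero_right] using hx)
theorem eta_zero {x : Fin m → ℝ} (hx : 2 ≤ ‖x‖) : eta m x = 0 :=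
  (bmp m).zero_of_le_dist (by simpa [bmp, dist_zero_right] using hx)

noncomputable def beta (m : ℕ) : (Fin m → ℝ) → ℝ := fun x => eta m x ^ 4

theorem beta_eq (x : Fin m → ℝ) : beta m x = eta m x ^ 4 := rfl

theorem beta_contDiff : ContDiff ℝ ∞ (beta m) := eta_contDiff.pow 4
theorem beta_diff : Differentiable ℝ (beta m) := beta_contDiff.differentiable (by norm_num)

theorem beta_compactSupport : HasCompactSupport (beta m) := by
  apply HasCompactSupport.intro (K := Metric.closedBall 0 2) (isCompact_closedBall _ _)
  intro x hx
  have : (2:ℝ) ≤ ‖x‖ := by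
    have := hx
    simp only [Metric.mem_closedBall, dist_zero_right, not_le] at this
    linarith
  simp [beta_eq, eta_zero this]

theorem beta_nonneg (x : Fin m → ℝ) : 0 ≤ beta m x := by
  rw [beta_eq]; positivity

theorem beta_le_one (x : Fin m → ℝ) : beta m x ≤ 1 := by
  rw [beta_eq]
  exact pow_le_one₀ (eta_nonneg x) (eta_le_one x)

theorem beta_one {x : Fin m → ℝ} (hx : ‖x‖ ≤ 1) : beta m x = 1 := by
  rw [beta_eq, eta_one hx]; norm_num

theorem beta_zero {x : Fin m → ℝ} (hx : 2 ≤ ‖x‖) : beta m x = 0 := by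
  rw [beta_eq, eta_zero hx]; norm_num

theorem sq_eta_sq (x : Fin m → ℝ) : (eta m x ^ 2) ^ 2 = beta m x := by
  rw [beta_eq]; ring

theorem pd_beta (i : Fin m) :
    pd i (beta m) = fun x => 4 * eta m x ^ 3 * pd i (eta m) x := by
  have h : beta m = fun x => (eta m x ^ 3) * eta m x := by
    funext x; rw [beta_eq]; ring
  rw [h, pd_mul i (f := fun x => eta m x ^ 3) (eta_diff.pow 3) eta_diff]
  funext x
  have h3 : pd i (fun x => eta m x ^ 3) x = 3 * eta m x ^ 2 * pd i (eta m) x := by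
    have h' : (fun x => eta m x ^ 3) = fun x => (eta m x * eta m x) * eta m x := by
      funext x; ring
    rw [h', pd_mul i (f := fun x => eta m x * eta m x) (eta_diff.mul eta_diff) eta_diff,
      pd_mul i eta_diff eta_diff]
    ring
  rw [h3]
  ring

theorem pd_pd_beta (i j : Fin m) :
    pd j (pd i (beta m)) = fun x => 12 * eta m x ^ 2 * pd j (eta m) x * pd i (eta m) x
      + 4 * eta m x ^ 3 * pd j (pd i (eta m)) x := by
  rw [pd_beta i]
  rw [pd_mul j (f := fun x => 4 * eta m x ^ 3) ((differentiable_const (4:ℝ)).mul (eta_diff.pow 3))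
    (pd_diff i eta_contDiff)]
  funext x
  have h1 : pd j (fun x => 4 * eta m x ^ 3) x = 4 * (3 * eta m x ^ 2 * pd j (eta m) x) := by
    have := pd_const_mul j (f := fun x => eta m x ^ 3) (eta_diff.pow 3) 4
    rw [this]
    have h' : (fun x => eta m x ^ 3) = fun x => (eta m x * eta m x) * eta m x := by
      funext x; ring
    rw [h', pd_mul j (f := fun x => eta m x * eta m x) (eta_diff.mul eta_diff) eta_diff, pd_mul j eta_diff eta_diff]
    ring
  rw [h1]
  ring

/-- The key bounds on the derivatives of `beta`, with `eta²` weight. -/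
theorem beta_bounds (m : ℕ) : ∃ K : ℝ, 0 < K ∧ ∀ (i j : Fin m) (x : Fin m → ℝ),
    |pd i (beta m) x| ≤ K * eta m x ^ 2 ∧ |pd j (pd i (beta m)) x| ≤ K * eta m x ^ 2 := by
  classical
  have hb1 : ∀ i : Fin m, ∃ C, 0 ≤ C ∧ ∀ x, |pd i (eta m) x| ≤ C := by
    intro i
    obtain ⟨C, hC⟩ := (pd_compactSupport i eta_compactSupport).exists_bound_of_continuous
      (pd_cont_s7 i eta_contDiff)
    exact ⟨C, le_trans (abs_nonneg _) (hC 0), fun x => hC x⟩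
  have hb2 : ∀ i j : Fin m, ∃ C, 0 ≤ C ∧ ∀ x, |pd j (pd i (eta m)) x| ≤ C := by
    intro i j
    obtain ⟨C, hC⟩ := (pd_compactSupport j (pd_compactSupport i
      eta_compactSupport)).exists_bound_of_continuous
      (pd_cont_s7 j (pd_contDiff i eta_contDiff))
    exact ⟨C, le_trans (abs_nonneg _) (hC 0), fun x => hC x⟩
  choose C1 hC1 using hb1
  choose C2 hC2 using hb2
  set K1 : ℝ := 1 + ∑ i, C1 i with hK1def
  have hK1pos : 0 < K1 := by
    have : 0 ≤ ∑ i, C1 i := Finset.sum_nonneg fun i _ => (hC1 i).1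
    linarith
  have hK1 : ∀ i x, |pd i (eta m) x| ≤ K1 := by
    intro i x
    have h1 : C1 i ≤ ∑ j, C1 j := Finset.single_le_sum (fun j _ => (hC1 j).1) (Finset.mem_univ i)
    have := (hC1 i).2 x
    linarith
  set K2 : ℝ := 1 + ∑ p : Fin m × Fin m, C2 p.1 p.2 with hK2def
  have hK2pos : 0 < K2 := by
    have : 0 ≤ ∑ p : Fin m × Fin m, C2 p.1 p.2 := Finset.sum_nonneg fun p _ => (hC2 p.1 p.2).1
    linarith
  have hK2 : ∀ i j x, |pd j (pd i (eta m)) x| ≤ K2 := by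
    intro i j x
    have h1 : C2 i j ≤ ∑ p : Fin m × Fin m, C2 p.1 p.2 :=
      Finset.single_le_sum (f := fun p : Fin m × Fin m => C2 p.1 p.2)
        (fun p _ => (hC2 p.1 p.2).1) (Finset.mem_univ (i, j))
    have := (hC2 i j).2 x
    linarith
  refine ⟨4 * K1 + 12 * K1 ^ 2 + 4 * K2, by positivity, fun i j x => ⟨?_, ?_⟩⟩
  · rw [pd_beta i]
    have h1 := hK1 i x
    have h2 := eta_nonneg x
    have h3 := eta_le_one x
    have e0 : |4 * eta m x ^ 3 * pd i (eta m) x| = 4 * eta m x ^ 3 * |pd i (eta m) x| := by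
      rw [abs_mul, abs_of_nonneg (show (0:ℝ) ≤ 4 * eta m x ^ 3 by positivity)]
    rw [e0]
    have he : eta m x ^ 3 ≤ eta m x ^ 2 := by nlinarith
    nlinarith [abs_nonneg (pd i (eta m) x), sq_nonneg (eta m x), hK2pos, hK1pos]
  · rw [pd_pd_beta i j]
    have hA := hK1 j x
    have hB := hK1 i x
    have hD := hK2 i j x
    have h2 := eta_nonneg x
    have h3 := eta_le_one x
    have he : eta m x ^ 3 ≤ eta m x ^ 2 := by nlinarith
    have t1 : |12 * eta m x ^ 2 * pd j (eta m) x * pd i (eta m) x|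
        ≤ 12 * K1 ^ 2 * eta m x ^ 2 := by
      rw [abs_mul, abs_mul, abs_of_nonneg (show (0:ℝ) ≤ 12 * eta m x ^ 2 by positivity)]
      have hAB : |pd j (eta m) x| * |pd i (eta m) x| ≤ K1 * K1 :=
        mul_le_mul hA hB (abs_nonneg _) (le_trans (abs_nonneg _) hA)
      nlinarith [sq_nonneg (eta m x)]
    have t2 : |4 * eta m x ^ 3 * pd j (pd i (eta m)) x| ≤ 4 * K2 * eta m x ^ 2 := by
      rw [abs_mul, abs_of_nonneg (show (0:ℝ) ≤ 4 * eta m x ^ 3 by positivity)]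
      nlinarith [abs_nonneg (pd j (pd i (eta m)) x), sq_nonneg (eta m x)]
    calc |12 * eta m x ^ 2 * pd j (eta m) x * pd i (eta m) x
        + 4 * eta m x ^ 3 * pd j (pd i (eta m)) x|
        ≤ |12 * eta m x ^ 2 * pd j (eta m) x * pd i (eta m) x|
          + |4 * eta m x ^ 3 * pd j (pd i (eta m)) x| := abs_add_le _ _
      _ ≤ 12 * K1 ^ 2 * eta m x ^ 2 + 4 * K2 * eta m x ^ 2 := by linarith
      _ ≤ (4 * K1 + 12 * K1 ^ 2 + 4 * K2) * eta m x ^ 2 := by nlinarith [sq_nonneg (eta m x)]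

set_option maxHeartbeats 1000000

/-! ### Scaled cutoff -/

noncomputable def chi (m : ℕ) (R : ℝ) : (Fin m → ℝ) → ℝ := fun x => beta m (R⁻¹ • x)
/-- The square root of `chi`. -/
noncomputable def se (m : ℕ) (R : ℝ) : (Fin m → ℝ) → ℝ := fun x => eta m (R⁻¹ • x) ^ 2

theorem chi_contDiff {R : ℝ} : ContDiff ℝ ∞ (chi m R) :=
  beta_contDiff.comp (contDiff_const_smul R⁻¹)

theorem chi_diff {R : ℝ} : Differentiable ℝ (chi m R) := chi_contDiff.differentiable (by norm_num)

theorem chi_nonneg {R : ℝ} (x : Fin m → ℝ) : 0 ≤ chi m R x := beta_nonneg _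
theorem chi_le_one {R : ℝ} (x : Fin m → ℝ) : chi m R x ≤ 1 := beta_le_one _

theorem norm_inv_smul {R : ℝ} (hR : 1 ≤ R) (x : Fin m → ℝ) : ‖R⁻¹ • x‖ = ‖x‖ / R := by
  have hR0 : (0:ℝ) < R := lt_of_lt_of_le one_pos hR
  rw [norm_smul, norm_inv, Real.norm_eq_abs, abs_of_pos hR0, div_eq_inv_mul]

theorem chi_one {R : ℝ} (hR : 1 ≤ R) {x : Fin m → ℝ} (hx : ‖x‖ ≤ R) : chi m R x = 1 := by
  have hR0 : (0:ℝ) < R := lt_of_lt_of_le one_pos hR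
  refine beta_one ?_
  rw [norm_inv_smul hR]
  exact (div_le_one hR0).2 hx

theorem se_sq {R : ℝ} (x : Fin m → ℝ) : se m R x ^ 2 = chi m R x := sq_eta_sq _
theorem se_nonneg {R : ℝ} (x : Fin m → ℝ) : 0 ≤ se m R x := sq_nonneg _
theorem se_le_one {R : ℝ} (x : Fin m → ℝ) : se m R x ≤ 1 :=
  pow_le_one₀ (eta_nonneg _) (eta_le_one _)

theorem se_zero {R : ℝ} (hR : 1 ≤ R) {x : Fin m → ℝ} (hx : 2 * R ≤ ‖x‖) : se m R x = 0 := by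
  have hR0 : (0:ℝ) < R := lt_of_lt_of_le one_pos hR
  have h2 : (2:ℝ) ≤ ‖R⁻¹ • x‖ := by
    rw [norm_inv_smul hR]
    rw [le_div_iff₀ hR0]
    linarith
  simp [se, eta_zero h2]

theorem chi_compactSupport {R : ℝ} (hR : 1 ≤ R) : HasCompactSupport (chi m R) := by
  have hR0 : (0:ℝ) < R := lt_of_lt_of_le one_pos hR
  apply HasCompactSupport.intro (K := Metric.closedBall 0 (2*R)) (isCompact_closedBall _ _)
  intro x hx
  have h2 : 2 * R ≤ ‖x‖ := by
    have := hx
    simp only [Metric.mem_closedBall, dist_zero_right, not_le] at this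
    linarith
  apply beta_zero
  rw [norm_inv_smul hR, le_div_iff₀ hR0]
  linarith

theorem pd_chi {R : ℝ} (hR : 1 ≤ R) (i : Fin m) :
    pd i (chi m R) = fun x => R⁻¹ * pd i (beta m) (R⁻¹ • x) := by
  funext x
  exact pd_comp_smul i beta_diff R⁻¹ x

theorem pd_pd_chi {R : ℝ} (hR : 1 ≤ R) (i j : Fin m) :
    pd j (pd i (chi m R)) = fun x => R⁻¹ * (R⁻¹ * pd j (pd i (beta m)) (R⁻¹ • x)) := by
  rw [pd_chi hR i]
  rw [pd_const_mul j (by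
    exact (pd_diff i beta_contDiff).comp (differentiable_id.const_smul R⁻¹)) R⁻¹]
  funext x
  congr 1
  exact pd_comp_smul j (pd_diff i beta_contDiff) R⁻¹ x

/-- bounds for the scaled cutoff. -/
theorem chi_bounds (m : ℕ) : ∃ K : ℝ, 0 < K ∧ ∀ (R : ℝ), 1 ≤ R → ∀ (i j : Fin m) (x : Fin m → ℝ),
    |pd i (chi m R) x| ≤ K / R * se m R x ∧ |pd j (pd i (chi m R)) x| ≤ K / R * se m R x := by
  obtain ⟨K, hK, hKb⟩ := beta_bounds m
  refine ⟨K, hK, fun R hR i j x => ?_⟩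
  have hR0 : (0:ℝ) < R := lt_of_lt_of_le one_pos hR
  have hRinv : R⁻¹ ≤ 1 := by
    rw [inv_le_one_iff₀]; right; exact hR
  have hRinv0 : (0:ℝ) < R⁻¹ := inv_pos.2 hR0
  constructor
  · rw [pd_chi hR i]
    have h := (hKb i j (R⁻¹ • x)).1
    have : |R⁻¹ * pd i (beta m) (R⁻¹ • x)| = R⁻¹ * |pd i (beta m) (R⁻¹ • x)| := by
      rw [abs_mul, abs_of_pos hRinv0]
    rw [this]
    calc R⁻¹ * |pd i (beta m) (R⁻¹ • x)| ≤ R⁻¹ * (K * eta m (R⁻¹ • x) ^ 2) := by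
          exact mul_le_mul_of_nonneg_left h (le_of_lt hRinv0)
      _ = K / R * se m R x := by
          simp only [se]
          field_simp
          try ring
  · rw [pd_pd_chi hR i j]
    have h := (hKb i j (R⁻¹ • x)).2
    have e : |R⁻¹ * (R⁻¹ * pd j (pd i (beta m)) (R⁻¹ • x))|
        = R⁻¹ * (R⁻¹ * |pd j (pd i (beta m)) (R⁻¹ • x)|) := by
      rw [abs_mul, abs_mul, abs_of_pos hRinv0]
    rw [e]
    calc R⁻¹ * (R⁻¹ * |pd j (pd i (beta m)) (R⁻¹ • x)|)
        ≤ R⁻¹ * (R⁻¹ * (K * eta m (R⁻¹ • x) ^ 2)) := by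
          refine mul_le_mul_of_nonneg_left (mul_le_mul_of_nonneg_left h (le_of_lt hRinv0))
            (le_of_lt hRinv0)
      _ ≤ 1 * (R⁻¹ * (K * eta m (R⁻¹ • x) ^ 2)) := by
          refine mul_le_mul_of_nonneg_right hRinv ?_
          positivity
      _ = K / R * se m R x := by
          simp only [se]
          field_simp
          try ring


set_option maxHeartbeats 1000000

/-- AM-GM helper. -/
theorem amgm {δ : ℝ} (hδ : 0 < δ) (a b : ℝ) : a * b ≤ δ * a ^ 2 + 1 / (4 * δ) * b ^ 2 := by
  have h : δ * a ^ 2 + 1 / (4 * δ) * b ^ 2 - a * b = (2 * δ * a - b) ^ 2 / (4 * δ) := by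
    field_simp
    ring
  nlinarith [sq_nonneg (2 * δ * a - b), div_nonneg (sq_nonneg (2 * δ * a - b)) (by positivity : (0:ℝ) ≤ 4 * δ)]

theorem abs_int_le {f : (Fin m → ℝ) → ℝ} : |∫ x, f x| ≤ ∫ x, |f x| := by
  simpa only [Real.norm_eq_abs] using norm_integral_le_integral_norm f

/-! ### Caccioppoli estimate for biharmonic functions -/

theorem caccioppoli {m : ℕ} {u : (Fin m → ℝ) → ℝ} (hu : ContDiff ℝ ∞ u)
    (hbih : ∀ x, ∑ i, pd i (pd i (fun y => ∑ j, pd j (pd j u) y)) x = 0)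
    (hu2 : Integrable (fun x => u x ^ 2))
    (hdu2 : ∀ i : Fin m, Integrable (fun x => pd i u x ^ 2)) :
    ∃ C : ℝ, ∀ R : ℝ, 1 ≤ R →
      ∫ x in Metric.ball (0 : Fin m → ℝ) R, (∑ j, pd j (pd j u) x) ^ 2 ≤ C := by
  classical
  set w : (Fin m → ℝ) → ℝ := fun y => ∑ j, pd j (pd j u) y with hw_def
  have hud : Differentiable ℝ u := hu.differentiable (by norm_num)
  have hw : ContDiff ℝ ∞ w :=
    ContDiff.sum (fun j _ => pd_contDiff j (pd_contDiff j hu))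
  obtain ⟨K, hK, hKb⟩ := chi_bounds m
  set δ : ℝ := 1 / (6 * K * (m + 1)) with hδ_def
  have hδ : 0 < δ := by positivity
  set c : ℝ := K / (4 * δ) with hc_def
  have hc : 0 < c := by positivity
  set B : ℝ := c * (m * ∫ x, u x ^ 2) + 2 * c * ∑ i, ∫ x, pd i u x ^ 2 with hB_def
  refine ⟨2 * B, fun R hR => ?_⟩
  set χ : (Fin m → ℝ) → ℝ := chi m R with hχ_def
  have hχc : ContDiff ℝ ∞ χ := chi_contDiff
  have hχd : Differentiable ℝ χ := chi_diff
  have hχs : HasCompactSupport χ := chi_compactSupport hR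
  set F : (Fin m → ℝ) → ℝ := fun x => χ x * u x with hF_def
  have hFc : ContDiff ℝ ∞ F := hχc.mul hu
  have hFs : HasCompactSupport F := hχs.mul_right
  have key : ∀ f : (Fin m → ℝ) → ℝ, Continuous f → HasCompactSupport f →
      Integrable (fun x => f x * w x) := fun f hc hs =>
    (hc.mul hw.continuous).integrable_of_hasCompactSupport hs.mul_right
  set X : ℝ := ∫ x, χ x * w x ^ 2 with hX_def
  have hXnn : 0 ≤ X := integral_nonneg fun x => mul_nonneg (chi_nonneg x) (sq_nonneg _)
  have hXint : Integrable (fun x => χ x * w x ^ 2) :=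
    (hχc.continuous.mul (hw.continuous.pow 2)).integrable_of_hasCompactSupport hχs.mul_right
  -- Step 1: IBP twice
  have step1 : ∀ i : Fin m, ∫ x, F x * pd i (pd i w) x = ∫ x, pd i (pd i F) x * w x := by
    intro i
    have a := ibp i hFc (pd_contDiff i hw) hFs
    have b := ibp i (pd_contDiff i hFc) hw (pd_compactSupport i hFs)
    rw [a, b, neg_neg]
  have int_lhs : ∀ i : Fin m, Integrable (fun x => F x * pd i (pd i w) x) := fun i =>
    (hFc.continuous.mul (pd_cont_s7 i (pd_contDiff i hw))).integrable_of_hasCompactSupport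
      hFs.mul_right
  have step2 : ∑ i : Fin m, ∫ x, F x * pd i (pd i w) x = 0 := by
    rw [← integral_finset_sum _ (fun i _ => int_lhs i)]
    have h0 : ∀ x, ∑ i : Fin m, F x * pd i (pd i w) x = 0 := by
      intro x
      rw [← Finset.mul_sum, hbih x, mul_zero]
    simp only [h0, integral_zero]
  -- Step 3: expansion of second derivative of F
  have exp1 : ∀ i : Fin m, pd i F = fun x => pd i χ x * u x + χ x * pd i u x := fun i =>
    pd_mul i hχd hud
  have exp2 : ∀ i : Fin m, pd i (pd i F) = fun x =>
      (pd i (pd i χ) x * u x + pd i χ x * pd i u x)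
      + (pd i χ x * pd i u x + χ x * pd i (pd i u) x) := by
    intro i
    rw [exp1 i, pd_add i (f := fun x => pd i χ x * u x) (g := fun x => χ x * pd i u x) ((pd_diff i hχc).mul hud) (hχd.mul (pd_diff i hu)),
      pd_mul i (pd_diff i hχc) hud, pd_mul i hχd (pd_diff i hu)]
  have intA : ∀ i : Fin m, Integrable (fun x => pd i (pd i χ) x * u x * w x) := fun i =>
    key _ ((pd_cont_s7 i (pd_contDiff i hχc)).mul hud.continuous)
      ((pd_compactSupport i (pd_compactSupport i hχs)).mul_right)
  have intB : ∀ i : Fin m, Integrable (fun x => pd i χ x * pd i u x * w x) := fun i =>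
    key _ ((pd_cont_s7 i hχc).mul (pd_cont_s7 i hu)) ((pd_compactSupport i hχs).mul_right)
  have intC : ∀ i : Fin m, Integrable (fun x => χ x * pd i (pd i u) x * w x) := fun i =>
    key _ (hχc.continuous.mul (pd_cont_s7 i (pd_contDiff i hu))) (hχs.mul_right)
  -- Step 4: split the integrals
  have step4 : ∀ i : Fin m, ∫ x, pd i (pd i F) x * w x
      = (∫ x, pd i (pd i χ) x * u x * w x) + 2 * (∫ x, pd i χ x * pd i u x * w x)
        + ∫ x, χ x * pd i (pd i u) x * w x := by
    intro i
    have s3 : ∫ x, (pd i χ x * pd i u x * w x + χ x * pd i (pd i u) x * w x)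
        = (∫ x, pd i χ x * pd i u x * w x) + ∫ x, χ x * pd i (pd i u) x * w x :=
      integral_add (intB i) (intC i)
    have s2 : ∫ x, (pd i χ x * pd i u x * w x
          + (pd i χ x * pd i u x * w x + χ x * pd i (pd i u) x * w x))
        = (∫ x, pd i χ x * pd i u x * w x)
          + ∫ x, (pd i χ x * pd i u x * w x + χ x * pd i (pd i u) x * w x) :=
      integral_add (intB i) ((intB i).add (intC i))
    have s1 : ∫ x, (pd i (pd i χ) x * u x * w x + (pd i χ x * pd i u x * w x
          + (pd i χ x * pd i u x * w x + χ x * pd i (pd i u) x * w x)))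
        = (∫ x, pd i (pd i χ) x * u x * w x) + ∫ x, (pd i χ x * pd i u x * w x
          + (pd i χ x * pd i u x * w x + χ x * pd i (pd i u) x * w x)) :=
      integral_add (intA i) ((intB i).add ((intB i).add (intC i)))
    have e : ∫ x, pd i (pd i F) x * w x = ∫ x, (pd i (pd i χ) x * u x * w x
        + (pd i χ x * pd i u x * w x
          + (pd i χ x * pd i u x * w x + χ x * pd i (pd i u) x * w x))) := by
      congr 1
      funext x
      rw [exp2 i]
      ring
    rw [e, s1, s2, s3]
    ring
  -- Step 5
  have step5 : ∑ i : Fin m, ∫ x, χ x * pd i (pd i u) x * w x = X := by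
    rw [← integral_finset_sum _ (fun i _ => intC i)]
    congr 1
    funext x
    rw [← Finset.sum_mul, ← Finset.mul_sum,
      show (∑ i : Fin m, pd i (pd i u) x) = w x from rfl]
    ring
  -- Combine
  have combine : X = -∑ i : Fin m, ((∫ x, pd i (pd i χ) x * u x * w x)
      + 2 * ∫ x, pd i χ x * pd i u x * w x) := by
    have h1 : ∑ i : Fin m, ∫ x, pd i (pd i F) x * w x = 0 := by
      rw [← step2]
      exact Finset.sum_congr rfl fun i _ => (step1 i).symm
    have h2 : ∑ i : Fin m, (((∫ x, pd i (pd i χ) x * u x * w x)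
        + 2 * (∫ x, pd i χ x * pd i u x * w x)) + ∫ x, χ x * pd i (pd i u) x * w x) = 0 := by
      rw [← h1]
      exact Finset.sum_congr rfl fun i _ => (step4 i).symm
    rw [Finset.sum_add_distrib, step5] at h2
    linarith
  -- bounds
  have hKR : K / R ≤ K := by
    have hR0 : (0:ℝ) < R := lt_of_lt_of_le one_pos hR
    rw [div_le_iff₀ hR0]
    nlinarith
  have master : ∀ (g : (Fin m → ℝ) → ℝ), (∀ x, |g x| ≤ K * se m R x)
      → ∀ (v : (Fin m → ℝ) → ℝ) (x : Fin m → ℝ),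
      |g x * v x * w x| ≤ K * δ * (χ x * w x ^ 2) + c * v x ^ 2 := by
    intro g hg v x
    have hse := se_nonneg (R := R) x
    have h1 : |g x * v x * w x| ≤ K * ((se m R x * |w x|) * |v x|) := by
      rw [abs_mul, abs_mul]
      have hgx := hg x
      nlinarith [abs_nonneg (v x), abs_nonneg (w x), abs_nonneg (g x),
        mul_nonneg (abs_nonneg (v x)) (abs_nonneg (w x))]
    have h2 : (se m R x * |w x|) * |v x| ≤ δ * (se m R x * |w x|) ^ 2
        + 1 / (4 * δ) * |v x| ^ 2 := amgm hδ _ _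
    have e1 : (se m R x * |w x|) ^ 2 = χ x * w x ^ 2 := by
      rw [mul_pow, se_sq, sq_abs]
    have e2 : |v x| ^ 2 = v x ^ 2 := sq_abs _
    calc |g x * v x * w x| ≤ K * ((se m R x * |w x|) * |v x|) := h1
      _ ≤ K * (δ * (se m R x * |w x|) ^ 2 + 1 / (4 * δ) * |v x| ^ 2) :=
          mul_le_mul_of_nonneg_left h2 (le_of_lt hK)
      _ = K * δ * (χ x * w x ^ 2) + c * v x ^ 2 := by
          rw [e1, e2, hc_def]
          ring
  have boundA : ∀ i : Fin m, |∫ x, pd i (pd i χ) x * u x * w x|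
      ≤ K * δ * X + c * ∫ x, u x ^ 2 := by
    intro i
    have hg : ∀ x, |pd i (pd i χ) x| ≤ K * se m R x := fun x =>
      le_trans (hKb R hR i i x).2 (mul_le_mul_of_nonneg_right hKR (se_nonneg x))
    have hle : ∫ x, |pd i (pd i χ) x * u x * w x|
        ≤ ∫ x, (K * δ * (χ x * w x ^ 2) + c * u x ^ 2) :=
      integral_mono (intA i).abs ((hXint.const_mul _).add (hu2.const_mul _))
        (fun x => master _ hg u x)
    have hsplit : ∫ x, (K * δ * (χ x * w x ^ 2) + c * u x ^ 2)
        = K * δ * X + c * ∫ x, u x ^ 2 := by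
      rw [integral_add (hXint.const_mul _) (hu2.const_mul _), integral_const_mul,
        integral_const_mul]
    calc |∫ x, pd i (pd i χ) x * u x * w x| ≤ ∫ x, |pd i (pd i χ) x * u x * w x| := abs_int_le
      _ ≤ K * δ * X + c * ∫ x, u x ^ 2 := by rw [← hsplit]; exact hle
  have boundB : ∀ i : Fin m, |∫ x, pd i χ x * pd i u x * w x|
      ≤ K * δ * X + c * ∫ x, pd i u x ^ 2 := by
    intro i
    have hg : ∀ x, |pd i χ x| ≤ K * se m R x := fun x =>
      le_trans (hKb R hR i i x).1 (mul_le_mul_of_nonneg_right hKR (se_nonneg x))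
    have hle : ∫ x, |pd i χ x * pd i u x * w x|
        ≤ ∫ x, (K * δ * (χ x * w x ^ 2) + c * pd i u x ^ 2) :=
      integral_mono (intB i).abs ((hXint.const_mul _).add ((hdu2 i).const_mul _))
        (fun x => master _ hg (pd i u) x)
    have hsplit : ∫ x, (K * δ * (χ x * w x ^ 2) + c * pd i u x ^ 2)
        = K * δ * X + c * ∫ x, pd i u x ^ 2 := by
      rw [integral_add (hXint.const_mul _) ((hdu2 i).const_mul _), integral_const_mul,
        integral_const_mul]
    calc |∫ x, pd i χ x * pd i u x * w x| ≤ ∫ x, |pd i χ x * pd i u x * w x| := abs_int_le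
      _ ≤ K * δ * X + c * ∫ x, pd i u x ^ 2 := by rw [← hsplit]; exact hle
  -- absorb
  have absorb : X ≤ 2 * B := by
    have hXle : X ≤ ∑ i : Fin m, (3 * (K * δ * X) + (c * ∫ x, u x ^ 2)
        + 2 * c * ∫ x, pd i u x ^ 2) := by
      calc X = -∑ i : Fin m, ((∫ x, pd i (pd i χ) x * u x * w x)
            + 2 * ∫ x, pd i χ x * pd i u x * w x) := combine
        _ ≤ ∑ i : Fin m, |(∫ x, pd i (pd i χ) x * u x * w x)
            + 2 * ∫ x, pd i χ x * pd i u x * w x| :=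
            le_trans (neg_le_abs _) (Finset.abs_sum_le_sum_abs _ _)
        _ ≤ ∑ i : Fin m, (3 * (K * δ * X) + (c * ∫ x, u x ^ 2)
            + 2 * c * ∫ x, pd i u x ^ 2) := by
            refine Finset.sum_le_sum fun i _ => ?_
            have hA := boundA i
            have hB := boundB i
            have habs2 : |2 * ∫ x, pd i χ x * pd i u x * w x|
                = 2 * |∫ x, pd i χ x * pd i u x * w x| := by
              rw [abs_mul, abs_of_nonneg (by norm_num : (0:ℝ) ≤ 2)]
            calc |(∫ x, pd i (pd i χ) x * u x * w x)
                + 2 * ∫ x, pd i χ x * pd i u x * w x|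
                ≤ |∫ x, pd i (pd i χ) x * u x * w x|
                  + |2 * ∫ x, pd i χ x * pd i u x * w x| := abs_add_le _ _
              _ = |∫ x, pd i (pd i χ) x * u x * w x|
                  + 2 * |∫ x, pd i χ x * pd i u x * w x| := by rw [habs2]
              _ ≤ 3 * (K * δ * X) + (c * ∫ x, u x ^ 2) + 2 * c * ∫ x, pd i u x ^ 2 := by
                  linarith
    have hsum : ∑ i : Fin m, (3 * (K * δ * X) + (c * ∫ x, u x ^ 2)
        + 2 * c * ∫ x, pd i u x ^ 2)
        = m * (3 * (K * δ * X)) + m * (c * ∫ x, u x ^ 2)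
          + 2 * c * ∑ i : Fin m, ∫ x, pd i u x ^ 2 := by
      rw [Finset.sum_add_distrib, Finset.sum_add_distrib, Finset.sum_const, Finset.sum_const,
        ← Finset.mul_sum]
      simp only [Finset.card_univ, Fintype.card_fin, nsmul_eq_mul]
    have hcoef : (m : ℝ) * (3 * (K * δ * X)) ≤ 1 / 2 * X := by
      have h1 : (m : ℝ) * (3 * K * δ) ≤ 1 / 2 := by
        have hKne : K ≠ 0 := ne_of_gt hK
        have e : (m : ℝ) * (3 * K * δ) = m / (2 * (m + 1)) := by
          rw [hδ_def]
          field_simp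
          ring
        rw [e, div_le_iff₀ (by positivity)]
        push_cast
        nlinarith [Nat.cast_nonneg (α := ℝ) m]
      calc (m : ℝ) * (3 * (K * δ * X)) = ((m : ℝ) * (3 * K * δ)) * X := by ring
        _ ≤ 1 / 2 * X := mul_le_mul_of_nonneg_right h1 hXnn
    rw [hsum] at hXle
    rw [hB_def]
    linarith
  -- conclude
  calc ∫ x in Metric.ball (0 : Fin m → ℝ) R, w x ^ 2
      = ∫ x in Metric.ball (0 : Fin m → ℝ) R, χ x * w x ^ 2 := by
        refine setIntegral_congr_fun measurableSet_ball fun x hx => ?_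
        have hxR : ‖x‖ ≤ R := by
          have h := hx
          simp only [Metric.mem_ball, dist_zero_right] at h
          linarith
        rw [hχ_def, chi_one hR hxR, one_mul]
    _ ≤ ∫ x, χ x * w x ^ 2 := setIntegral_le_integral hXint
        (Filter.Eventually.of_forall fun x => mul_nonneg (chi_nonneg x) (sq_nonneg _))
    _ ≤ 2 * B := absorb

/-! ### Liouville theorem for harmonic functions with L²-bounds on balls -/

theorem harmonic_liouville {m : ℕ} (hm : 1 ≤ m) {v : (Fin m → ℝ) → ℝ} (hv : ContDiff ℝ ∞ v)
    (hharm : ∀ x, ∑ i, pd i (pd i v) x = 0)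
    {C : ℝ} (hL2 : ∀ R : ℝ, 1 ≤ R → ∫ x in Metric.ball (0 : Fin m → ℝ) R, v x ^ 2 ≤ C) :
    ∀ x, v x = 0 := by
  classical
  have hvd : Differentiable ℝ v := hv.differentiable (by norm_num)
  obtain ⟨K, hK, hKb⟩ := chi_bounds m
  have hC0 : 0 ≤ C :=
    le_trans (setIntegral_nonneg measurableSet_ball fun x _ => sq_nonneg _) (hL2 1 le_rfl)
  set δ : ℝ := 1 / (2 * K) with hδ_def
  have hδ : 0 < δ := by positivity
  set C' : ℝ := K * m * C / (2 * δ) with hC'_def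
  have hC'0 : 0 ≤ C' := by positivity
  -- the localized Dirichlet energy
  set X : ℝ → ℝ := fun R => ∑ i : Fin m, ∫ x, chi m R x * pd i v x ^ 2 with hX_def
  have hXint : ∀ (R : ℝ), 1 ≤ R → ∀ i : Fin m,
      Integrable (fun x => chi m R x * pd i v x ^ 2) := fun R hR i =>
    (chi_contDiff.continuous.mul ((pd_cont_s7 i hv).pow 2)).integrable_of_hasCompactSupport
      (chi_compactSupport hR).mul_right
  have hXnn : ∀ R : ℝ, 1 ≤ R → 0 ≤ X R := fun R hR =>
    Finset.sum_nonneg fun i _ => integral_nonneg fun x =>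
      mul_nonneg (chi_nonneg x) (sq_nonneg _)
  -- main estimate : X R ≤ C' / R
  have main : ∀ R : ℝ, 1 ≤ R → X R ≤ C' / R := by
    intro R hR
    have hR0 : (0:ℝ) < R := lt_of_lt_of_le one_pos hR
    set χ : (Fin m → ℝ) → ℝ := chi m R with hχ_def
    have hχc : ContDiff ℝ ∞ χ := chi_contDiff
    have hχd : Differentiable ℝ χ := chi_diff
    have hχs : HasCompactSupport χ := chi_compactSupport hR
    -- the identity
    have intD : ∀ i : Fin m, Integrable (fun x => pd i χ x * v x * pd i v x) := fun i =>
      (((pd_cont_s7 i hχc).mul hv.continuous).mul (pd_cont_s7 i hv)).integrable_of_hasCompactSupport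
        ((pd_compactSupport i hχs).mul_right).mul_right
    have intE : ∀ i : Fin m, Integrable (fun x => χ x * (pd i v x * pd i v x)) := fun i =>
      (hχc.continuous.mul ((pd_cont_s7 i hv).mul (pd_cont_s7 i hv))).integrable_of_hasCompactSupport
        hχs.mul_right
    have identity : ∀ i : Fin m, ∫ x, (χ x * v x) * pd i (pd i v) x
        = -((∫ x, pd i χ x * v x * pd i v x) + ∫ x, χ x * (pd i v x * pd i v x)) := by
      intro i
      have a := ibp i (hχc.mul hv) (pd_contDiff i hv) (hχs.mul_right)
      rw [a]
      congr 1
      have e : ∫ x, pd i (fun x => χ x * v x) x * pd i v x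
          = ∫ x, (pd i χ x * v x * pd i v x + χ x * (pd i v x * pd i v x)) := by
        congr 1
        funext x
        rw [pd_mul i hχd hvd]
        ring
      rw [e, integral_add (intD i) (intE i)]
    have sum0 : ∑ i : Fin m, ∫ x, (χ x * v x) * pd i (pd i v) x = 0 := by
      rw [← integral_finset_sum _ (f := fun i x => (χ x * v x) * pd i (pd i v) x) (fun i _ =>
        ((hχc.mul hv).continuous.mul (pd_cont_s7 i (pd_contDiff i hv))).integrable_of_hasCompactSupport
          (hχs.mul_right).mul_right)]
      have h0 : ∀ x, ∑ i : Fin m, (χ x * v x) * pd i (pd i v) x = 0 := by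
        intro x
        rw [← Finset.mul_sum, hharm x, mul_zero]
      simp only [h0, integral_zero]
    have hXeq : X R = -∑ i : Fin m, ∫ x, pd i χ x * v x * pd i v x := by
      have h2 : ∑ i : Fin m, (-((∫ x, pd i χ x * v x * pd i v x)
          + ∫ x, χ x * (pd i v x * pd i v x))) = 0 := by
        rw [← sum0]
        exact Finset.sum_congr rfl fun i _ => (identity i).symm
      rw [Finset.sum_neg_distrib, neg_eq_zero, Finset.sum_add_distrib] at h2
      have e : X R = ∑ i : Fin m, ∫ x, χ x * (pd i v x * pd i v x) := by
        rw [hX_def]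
        refine Finset.sum_congr rfl fun i _ => ?_
        congr 1
        funext x
        rw [sq]
      rw [e]
      linarith
    -- pointwise bound with indicator
    have intInd : Integrable ((Metric.ball (0 : Fin m → ℝ) (2*R)).indicator fun x => v x ^ 2) := by
      refine (IntegrableOn.integrable_indicator ?_ measurableSet_ball)
      exact (((hv.continuous.pow 2).continuousOn.integrableOn_compact
        (isCompact_closedBall _ _)).mono_set Metric.ball_subset_closedBall)
    have ptwise : ∀ (i : Fin m) (x : Fin m → ℝ), |pd i χ x * v x * pd i v x|
        ≤ K / R * δ * (χ x * pd i v x ^ 2)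
          + K / R * (1 / (4 * δ)) * (Metric.ball (0 : Fin m → ℝ) (2*R)).indicator
            (fun x => v x ^ 2) x := by
      intro i x
      have hse := se_nonneg (R := R) x
      have hKR0 : (0:ℝ) ≤ K / R := le_of_lt (div_pos hK hR0)
      by_cases hx : x ∈ Metric.ball (0 : Fin m → ℝ) (2*R)
      · rw [Set.indicator_of_mem hx]
        have h1 : |pd i χ x * v x * pd i v x| ≤ K / R * ((se m R x * |pd i v x|) * |v x|) := by
          rw [abs_mul, abs_mul]
          have hgx := (hKb R hR i i x).1
          nlinarith [abs_nonneg (v x), abs_nonneg (pd i v x), abs_nonneg (pd i χ x),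
            mul_nonneg (abs_nonneg (v x)) (abs_nonneg (pd i v x))]
        have h2 : (se m R x * |pd i v x|) * |v x| ≤ δ * (se m R x * |pd i v x|) ^ 2
            + 1 / (4 * δ) * |v x| ^ 2 := amgm hδ _ _
        have e1 : (se m R x * |pd i v x|) ^ 2 = χ x * pd i v x ^ 2 := by
          rw [mul_pow, se_sq, sq_abs]
        have e2 : |v x| ^ 2 = v x ^ 2 := sq_abs _
        calc |pd i χ x * v x * pd i v x| ≤ K / R * ((se m R x * |pd i v x|) * |v x|) := h1
          _ ≤ K / R * (δ * (se m R x * |pd i v x|) ^ 2 + 1 / (4 * δ) * |v x| ^ 2) :=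
              mul_le_mul_of_nonneg_left h2 hKR0
          _ = K / R * δ * (χ x * pd i v x ^ 2) + K / R * (1 / (4 * δ)) * v x ^ 2 := by
              rw [e1, e2]
              ring
      · have hsz : se m R x = 0 := by
          refine se_zero hR ?_
          have h := hx
          simp only [Metric.mem_ball, dist_zero_right, not_lt] at h
          exact h
        have hχz : χ x = 0 := by
          rw [hχ_def, ← se_sq (R := R) x, hsz]
          norm_num
        have hz : pd i χ x = 0 := by
          have h := (hKb R hR i i x).1
          rw [hsz, mul_zero] at h
          have := abs_nonneg (pd i χ x)
          have : |pd i χ x| = 0 := le_antisymm h this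
          exact abs_eq_zero.mp this
        rw [hz, Set.indicator_of_notMem hx]
        simp [hχz]
    -- integrate
    have bound : ∀ i : Fin m, |∫ x, pd i χ x * v x * pd i v x|
        ≤ K / R * δ * (∫ x, χ x * pd i v x ^ 2) + K / R * (1 / (4 * δ)) * C := by
      intro i
      have hintchi : Integrable (fun x => χ x * pd i v x ^ 2) := hXint R hR i
      have hle : ∫ x, |pd i χ x * v x * pd i v x|
          ≤ ∫ x, (K / R * δ * (χ x * pd i v x ^ 2)
            + K / R * (1 / (4 * δ)) * (Metric.ball (0 : Fin m → ℝ) (2*R)).indicator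
              (fun x => v x ^ 2) x) :=
        integral_mono (intD i).abs ((hintchi.const_mul _).add (intInd.const_mul _))
          (fun x => ptwise i x)
      have hsplit : ∫ x, (K / R * δ * (χ x * pd i v x ^ 2)
            + K / R * (1 / (4 * δ)) * (Metric.ball (0 : Fin m → ℝ) (2*R)).indicator
              (fun x => v x ^ 2) x)
          = K / R * δ * (∫ x, χ x * pd i v x ^ 2)
            + K / R * (1 / (4 * δ)) * ∫ x, (Metric.ball (0 : Fin m → ℝ) (2*R)).indicator
              (fun x => v x ^ 2) x := by
        rw [integral_add (hintchi.const_mul _) (intInd.const_mul _), integral_const_mul,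
          integral_const_mul]
      have hind : ∫ x, (Metric.ball (0 : Fin m → ℝ) (2*R)).indicator (fun x => v x ^ 2) x ≤ C := by
        rw [integral_indicator measurableSet_ball]
        exact hL2 (2*R) (by linarith)
      have hKRδ : (0:ℝ) ≤ K / R * (1 / (4 * δ)) := by positivity
      calc |∫ x, pd i χ x * v x * pd i v x| ≤ ∫ x, |pd i χ x * v x * pd i v x| := abs_int_le
        _ ≤ _ := hle
        _ = _ := hsplit
        _ ≤ K / R * δ * (∫ x, χ x * pd i v x ^ 2) + K / R * (1 / (4 * δ)) * C := by
            have := mul_le_mul_of_nonneg_left hind hKRδ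
            linarith
    -- absorb
    have habs : X R ≤ K / R * δ * X R + K / R * (1 / (4 * δ)) * (m * C) := by
      calc X R = -∑ i : Fin m, ∫ x, pd i χ x * v x * pd i v x := hXeq
        _ ≤ ∑ i : Fin m, |∫ x, pd i χ x * v x * pd i v x| :=
            le_trans (neg_le_abs _) (Finset.abs_sum_le_sum_abs _ _)
        _ ≤ ∑ i : Fin m, (K / R * δ * (∫ x, χ x * pd i v x ^ 2) + K / R * (1 / (4 * δ)) * C) :=
            Finset.sum_le_sum fun i _ => bound i
        _ = K / R * δ * (∑ i : Fin m, ∫ x, χ x * pd i v x ^ 2)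
            + K / R * (1 / (4 * δ)) * (m * C) := by
            rw [Finset.sum_add_distrib, ← Finset.mul_sum, Finset.sum_const]
            simp only [Finset.card_univ, Fintype.card_fin, nsmul_eq_mul]
            ring
        _ = K / R * δ * X R + K / R * (1 / (4 * δ)) * (m * C) := by
            simp only [hX_def, hχ_def]
    have hhalf : K / R * δ ≤ 1 / 2 := by
      rw [hδ_def]
      have e : K / R * (1 / (2 * K)) = 1 / (2 * R) := by
        field_simp
      rw [e]
      rw [div_le_div_iff₀ (by positivity) (by norm_num)]
      linarith
    have h1 : K / R * δ * X R ≤ 1 / 2 * X R :=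
      mul_le_mul_of_nonneg_right hhalf (hXnn R hR)
    have h2 : K / R * (1 / (4 * δ)) * (m * C) = C' / R / 2 := by
      rw [hC'_def]
      field_simp
      ring
    have h3 : X R ≤ 1 / 2 * X R + C' / R / 2 := by
      rw [← h2]
      linarith
    have : (0:ℝ) ≤ C' / R := by positivity
    linarith
  -- each partial derivative vanishes
  have hpdzero : ∀ (i : Fin m) (x₀ : Fin m → ℝ), pd i v x₀ = 0 := by
    intro i x₀
    by_contra hne
    set f : (Fin m → ℝ) → ℝ := fun x => pd i v x ^ 2 with hf_def
    have hfc : Continuous f := (pd_cont_s7 i hv).pow 2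
    set ε : ℝ := pd i v x₀ ^ 2 with hε_def
    have hε : 0 < ε := by positivity
    have hopen : IsOpen {x | ε / 2 < f x} := isOpen_lt continuous_const hfc
    have hmem : x₀ ∈ {x | ε / 2 < f x} := by
      simp only [Set.mem_setOf_eq, hf_def, hε_def]
      linarith
    obtain ⟨d, hd, hball⟩ := Metric.isOpen_iff.1 hopen x₀ hmem
    set Q : ℝ := ε / 2 * (volume (Metric.ball x₀ d)).toReal with hQ_def
    have hvolpos : 0 < (volume (Metric.ball x₀ d)).toReal :=
      ENNReal.toReal_pos (ne_of_gt (Metric.measure_ball_pos _ _ hd)) measure_ball_lt_top.ne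
    have hQ : 0 < Q := by
      rw [hQ_def]
      positivity
    set R : ℝ := max 1 (max (‖x₀‖ + d) (C' / Q + 1)) with hR_def
    have hR1 : 1 ≤ R := le_max_left _ _
    have hRx : ‖x₀‖ + d ≤ R := le_trans (le_max_left _ _) (le_max_right _ _)
    have hRQ : C' / Q + 1 ≤ R := le_trans (le_max_right _ _) (le_max_right _ _)
    -- lower bound for X R
    have hlow : Q ≤ X R := by
      have hsub : Metric.ball x₀ d ⊆ {x | ‖x‖ ≤ R} := by
        intro x hx
        have hdist : dist x x₀ < d := Metric.mem_ball.1 hx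
        have htri := norm_add_le (x - x₀) x₀
        rw [sub_add_cancel] at htri
        have hd2 : ‖x - x₀‖ < d := by rwa [← dist_eq_norm]
        simp only [Set.mem_setOf_eq]
        linarith
      have hIntOn : IntegrableOn f (Metric.ball x₀ d) :=
        ((hfc.continuousOn.integrableOn_compact (isCompact_closedBall _ _)).mono_set
          Metric.ball_subset_closedBall)
      have step_a : Q ≤ ∫ x in Metric.ball x₀ d, f x := by
        rw [hQ_def]
        have := setIntegral_ge_of_const_le measurableSet_ball measure_ball_lt_top.ne
          (fun x hx => le_of_lt (hball hx)) hIntOn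
        rw [smul_eq_mul, measureReal_def] at this
        linarith
      have step_b : ∫ x in Metric.ball x₀ d, f x
          = ∫ x in Metric.ball x₀ d, chi m R x * f x := by
        refine setIntegral_congr_fun measurableSet_ball fun x hx => ?_
        rw [chi_one hR1 (hsub hx), one_mul]
      have step_c : ∫ x in Metric.ball x₀ d, chi m R x * f x ≤ ∫ x, chi m R x * f x :=
        setIntegral_le_integral (hXint R hR1 i)
          (Filter.Eventually.of_forall fun x => mul_nonneg (chi_nonneg x) (sq_nonneg _))
      have step_d : ∫ x, chi m R x * f x ≤ X R := by
        rw [hX_def]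
        refine Finset.single_le_sum (f := fun j => ∫ x, chi m R x * pd j v x ^ 2)
          (fun j _ => integral_nonneg fun x => mul_nonneg (chi_nonneg x) (sq_nonneg _))
          (Finset.mem_univ i)
      calc Q ≤ ∫ x in Metric.ball x₀ d, f x := step_a
        _ = ∫ x in Metric.ball x₀ d, chi m R x * f x := step_b
        _ ≤ ∫ x, chi m R x * f x := step_c
        _ ≤ X R := step_d
    have hup : X R ≤ C' / R := main R hR1
    have hRpos : (0:ℝ) < R := lt_of_lt_of_le one_pos hR1
    have hQR : Q * R ≤ C' := (le_div_iff₀ hRpos).1 (le_trans hlow hup)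
    have hcontra : Q * (C' / Q + 1) ≤ C' := le_trans (by nlinarith) hQR
    have : C' + Q ≤ C' := by
      have e : Q * (C' / Q + 1) = C' + Q := by
        field_simp
      linarith [e ▸ hcontra]
    linarith
  -- v is constant
  have hfz : ∀ x : Fin m → ℝ, fderiv ℝ v x = 0 := by
    intro x
    ext y
    have hy : y = ∑ i : Fin m, y i • (Pi.single i 1 : Fin m → ℝ) := by
      have h1 : ∀ i : Fin m, y i • (Pi.single i 1 : Fin m → ℝ) = Pi.single i (y i) := by
        intro i
        rw [← Pi.single_smul, smul_eq_mul, mul_one]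
      calc y = ∑ i : Fin m, Pi.single i (y i) := (Finset.univ_sum_single y).symm
        _ = ∑ i : Fin m, y i • (Pi.single i 1 : Fin m → ℝ) := by
            exact Finset.sum_congr rfl fun i _ => (h1 i).symm
    rw [hy, map_sum]
    have h0 : ∀ i : Fin m, fderiv ℝ v x (y i • (Pi.single i 1 : Fin m → ℝ)) = 0 := by
      intro i
      rw [ContinuousLinearMap.map_smul]
      have hz : fderiv ℝ v x (Pi.single i 1) = 0 := hpdzero i x
      rw [hz, smul_zero]
    simp [h0]
  have hconst : ∀ x : Fin m → ℝ, v x = v 0 := fun x =>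
    is_const_of_fderiv_eq_zero hvd hfz x 0
  -- the constant must be zero
  have hzero : v 0 = 0 := by
    by_contra hne
    set q : ℝ := v 0 ^ 2 with hq_def
    have hq : 0 < q := by positivity
    set R : ℝ := max 1 (C / (2 * q) + 1) with hR_def
    have hR1 : 1 ≤ R := le_max_left _ _
    have hR0 : (0:ℝ) < R := lt_of_lt_of_le one_pos hR1
    have hint : ∫ x in Metric.ball (0 : Fin m → ℝ) R, v x ^ 2 = (2 * R) ^ m * q := by
      have e : ∫ x in Metric.ball (0 : Fin m → ℝ) R, v x ^ 2
          = ∫ _x in Metric.ball (0 : Fin m → ℝ) R, q := by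
        refine setIntegral_congr_fun measurableSet_ball fun x _ => ?_
        rw [hq_def, hconst x]
      rw [e, setIntegral_const, smul_eq_mul]
      congr 1
      rw [measureReal_def, Real.volume_pi_ball _ hR0, ENNReal.toReal_ofReal (by positivity)]
      simp
    have hge : 2 * R * q ≤ (2 * R) ^ m * q := by
      have h2R : (1:ℝ) ≤ 2 * R := by linarith
      have := le_self_pow₀ h2R (by omega : m ≠ 0)
      nlinarith
    have hle := hL2 R hR1
    rw [hint] at hle
    have : 2 * R * q ≤ C := le_trans hge hle
    have hR2 : C / (2 * q) + 1 ≤ R := le_max_right _ _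
    have h2q : (0:ℝ) < 2 * q := by positivity
    have hmul := mul_le_mul_of_nonneg_left hR2 (le_of_lt h2q)
    have e : 2 * q * (C / (2 * q) + 1) = C + 2 * q := by
      field_simp
    nlinarith
  intro x
  rw [hconst x, hzero]

theorem pd_proj {m n : ℕ} (i : Fin m) (α : Fin n) {f : (Fin m → ℝ) → Fin n → ℝ}
    (hf : Differentiable ℝ f) :
    pd i (fun y => f y α) = fun x => pd i f x α := by
  funext x
  have h : (fun y => f y α) = (ContinuousLinearMap.proj (R := ℝ) (φ := fun _ : Fin n => ℝ) α) ∘ f :=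
    rfl
  simp only [pd, h]
  rw [fderiv_comp x (ContinuousLinearMap.differentiableAt _) (hf x)]
  simp

theorem comp_smooth {m n : ℕ} (α : Fin n) {f : (Fin m → ℝ) → Fin n → ℝ}
    (hf : ContDiff ℝ ∞ f) : ContDiff ℝ ∞ (fun y => f y α) :=
  (ContinuousLinearMap.proj (R := ℝ) (φ := fun _ : Fin n => ℝ) α).contDiff.comp hf

theorem lap_contDiff {m n : ℕ} {f : (Fin m → ℝ) → Fin n → ℝ} (hf : ContDiff ℝ ∞ f) :
    ContDiff ℝ ∞ (lap f) :=
  ContDiff.sum fun i _ => pd_contDiff i (pd_contDiff i hf)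

theorem comp_sum {m n : ℕ} (α : Fin n) {ψ : (Fin m → ℝ) → Fin n → ℝ}
    (hψ : ContDiff ℝ ∞ ψ) :
    (fun x => lap ψ x α) = fun x => ∑ i, pd i (pd i (fun y => ψ y α)) x := by
  funext x
  have e0 : lap ψ x α = ∑ i, pd i (pd i ψ) x α := by
    simp [lap, Finset.sum_apply]
  rw [e0]
  refine Finset.sum_congr rfl fun i _ => ?_
  have e1 : pd i (fun y => ψ y α) = fun y => pd i ψ y α :=
    pd_proj i α (hψ.differentiable (by norm_num))
  rw [e1, pd_proj i α (pd_diff i hψ)]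

/-- Flat Liouville theorem for triharmonic maps: if `φ : ℝ^m → ℝ^n` is smooth with
`Δ³φ = 0`, the energies of `φ` up to third order derivatives are finite, and `m ≠ 6`,
then `φ` is harmonic. -/
theorem triharmonic_liouville_flat {m n : ℕ}
    (φ : (Fin m → ℝ) → Fin n → ℝ) (hφ : ContDiff ℝ (⊤ : ℕ∞) φ)
    (htri : ∀ x, lap (lap (lap φ)) x = 0)
    (hE : Integrable (fun x =>
      (∑ i, ∑ α, (pd i φ x α) ^ 2) +
      (∑ i, ∑ j, ∑ α, (pd j (pd i φ) x α) ^ 2) +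
      (∑ i, ∑ j, ∑ k, ∑ α, (pd k (pd j (pd i φ)) x α) ^ 2)))
    (hm : m ≠ 6) :
    ∀ x, lap φ x = 0 := by
  rcases Nat.eq_zero_or_pos m with hm0 | hmpos
  · subst hm0
    intro x
    funext α
    simp [lap, Finset.univ_eq_empty]
  have hm1 : 1 ≤ m := hmpos
  have hphi : ContDiff ℝ ∞ φ := hφ.of_le (by simp)
  -- the master energy density
  set H : (Fin m → ℝ) → ℝ := fun x =>
      (∑ i, ∑ α, (pd i φ x α) ^ 2) +
      (∑ i, ∑ j, ∑ α, (pd j (pd i φ) x α) ^ 2) +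
      (∑ i, ∑ j, ∑ k, ∑ α, (pd k (pd j (pd i φ)) x α) ^ 2) with hH_def
  have hHnn : ∀ x, 0 ≤ H x := by
    intro x
    simp only [hH_def]
    have h1 : (0:ℝ) ≤ ∑ i, ∑ α, (pd i φ x α) ^ 2 :=
      Finset.sum_nonneg fun i _ => Finset.sum_nonneg fun α _ => sq_nonneg _
    have h2 : (0:ℝ) ≤ ∑ i, ∑ j, ∑ α, (pd j (pd i φ) x α) ^ 2 :=
      Finset.sum_nonneg fun i _ => Finset.sum_nonneg fun j _ =>
        Finset.sum_nonneg fun α _ => sq_nonneg _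
    have h3 : (0:ℝ) ≤ ∑ i, ∑ j, ∑ k, ∑ α, (pd k (pd j (pd i φ)) x α) ^ 2 :=
      Finset.sum_nonneg fun i _ => Finset.sum_nonneg fun j _ =>
        Finset.sum_nonneg fun k _ => Finset.sum_nonneg fun α _ => sq_nonneg _
    linarith
  have key : ∀ α : Fin n, ∀ x, lap φ x α = 0 := by
    intro α
    set u : (Fin m → ℝ) → ℝ := fun x => lap φ x α with hu_def
    have husm : ContDiff ℝ ∞ u := comp_smooth α (lap_contDiff hphi)
    have hux : ∀ x, u x = ∑ i, pd i (pd i φ) x α := by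
      intro x
      simp [hu_def, lap, Finset.sum_apply]
    -- sum-form of u
    have hu_eq : u = fun y => ∑ i, (fun z => pd i (pd i φ) z α) y := by
      funext y
      simpa using hux y
    -- u ∈ L²
    have hu2 : Integrable (fun x => u x ^ 2) := by
      refine ((hE.const_mul m).mono' ((husm.continuous.pow 2).aestronglyMeasurable)
        (Filter.Eventually.of_forall fun x => ?_))
      rw [Real.norm_eq_abs, abs_of_nonneg (sq_nonneg _)]
      have h1 : u x ^ 2 ≤ m * ∑ i, (pd i (pd i φ) x α) ^ 2 := by
        rw [hux x]
        simpa using sq_sum_le_card_mul_sum_sq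
          (s := Finset.univ) (f := fun i => pd i (pd i φ) x α)
      have h2 : ∑ i, (pd i (pd i φ) x α) ^ 2 ≤ ∑ i, ∑ j, ∑ β, (pd j (pd i φ) x β) ^ 2 := by
        refine Finset.sum_le_sum fun i _ => ?_
        calc (pd i (pd i φ) x α) ^ 2
            ≤ ∑ β, (pd i (pd i φ) x β) ^ 2 :=
              Finset.single_le_sum (f := fun β => (pd i (pd i φ) x β) ^ 2)
                (fun β _ => sq_nonneg _) (Finset.mem_univ α)
          _ ≤ ∑ j, ∑ β, (pd j (pd i φ) x β) ^ 2 :=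
              Finset.single_le_sum (f := fun j => ∑ β, (pd j (pd i φ) x β) ^ 2)
                (fun j _ => Finset.sum_nonneg fun β _ => sq_nonneg _) (Finset.mem_univ i)
      have h3 : ∑ i, ∑ j, ∑ β, (pd j (pd i φ) x β) ^ 2 ≤ H x := by
        simp only [hH_def]
        have h1' : (0:ℝ) ≤ ∑ i, ∑ α', (pd i φ x α') ^ 2 :=
          Finset.sum_nonneg fun i _ => Finset.sum_nonneg fun β _ => sq_nonneg _
        have h3' : (0:ℝ) ≤ ∑ i, ∑ j, ∑ k, ∑ β, (pd k (pd j (pd i φ)) x β) ^ 2 :=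
          Finset.sum_nonneg fun i _ => Finset.sum_nonneg fun j _ =>
            Finset.sum_nonneg fun k _ => Finset.sum_nonneg fun β _ => sq_nonneg _
        linarith
      have hmcast : (0:ℝ) ≤ (m:ℝ) := Nat.cast_nonneg m
      nlinarith [hHnn x]
    -- derivatives of u are in L²
    have hdiffcomp : ∀ i : Fin m, Differentiable ℝ (fun z => pd i (pd i φ) z α) := fun i =>
      (comp_smooth α (pd_contDiff i (pd_contDiff i hphi))).differentiable (by norm_num)
    have hpdu : ∀ k : Fin m, pd k u = fun x => ∑ i, pd k (pd i (pd i φ)) x α := by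
      intro k
      rw [hu_eq, pd_sum Finset.univ k hdiffcomp]
      funext x
      refine Finset.sum_congr rfl fun i _ => ?_
      have := pd_proj k α (f := pd i (pd i φ)) ((pd_contDiff i (pd_contDiff i hphi)).differentiable
        (by norm_num))
      exact congrFun this x
    have hdu2 : ∀ k : Fin m, Integrable (fun x => pd k u x ^ 2) := by
      intro k
      refine ((hE.const_mul m).mono' (((pd_cont_s7 k husm).pow 2).aestronglyMeasurable)
        (Filter.Eventually.of_forall fun x => ?_))
      rw [Real.norm_eq_abs, abs_of_nonneg (sq_nonneg _)]
      have h1 : pd k u x ^ 2 ≤ m * ∑ i, (pd k (pd i (pd i φ)) x α) ^ 2 := by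
        rw [congrFun (hpdu k) x]
        simpa using sq_sum_le_card_mul_sum_sq
          (s := Finset.univ) (f := fun i => pd k (pd i (pd i φ)) x α)
      have h2 : ∑ i, (pd k (pd i (pd i φ)) x α) ^ 2
          ≤ ∑ i, ∑ j, ∑ k', ∑ β, (pd k' (pd j (pd i φ)) x β) ^ 2 := by
        refine Finset.sum_le_sum fun i _ => ?_
        calc (pd k (pd i (pd i φ)) x α) ^ 2
            ≤ ∑ β, (pd k (pd i (pd i φ)) x β) ^ 2 :=
              Finset.single_le_sum (f := fun β => (pd k (pd i (pd i φ)) x β) ^ 2)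
                (fun β _ => sq_nonneg _) (Finset.mem_univ α)
          _ ≤ ∑ k', ∑ β, (pd k' (pd i (pd i φ)) x β) ^ 2 :=
              Finset.single_le_sum (f := fun k' => ∑ β, (pd k' (pd i (pd i φ)) x β) ^ 2)
                (fun k' _ => Finset.sum_nonneg fun β _ => sq_nonneg _) (Finset.mem_univ k)
          _ ≤ ∑ j, ∑ k', ∑ β, (pd k' (pd j (pd i φ)) x β) ^ 2 :=
              Finset.single_le_sum (f := fun j => ∑ k', ∑ β, (pd k' (pd j (pd i φ)) x β) ^ 2)
                (fun j _ => Finset.sum_nonneg fun k' _ =>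
                  Finset.sum_nonneg fun β _ => sq_nonneg _) (Finset.mem_univ i)
      have h3 : ∑ i, ∑ j, ∑ k', ∑ β, (pd k' (pd j (pd i φ)) x β) ^ 2 ≤ H x := by
        simp only [hH_def]
        have h1' : (0:ℝ) ≤ ∑ i, ∑ α', (pd i φ x α') ^ 2 :=
          Finset.sum_nonneg fun i _ => Finset.sum_nonneg fun β _ => sq_nonneg _
        have h2' : (0:ℝ) ≤ ∑ i, ∑ j, ∑ β, (pd j (pd i φ) x β) ^ 2 :=
          Finset.sum_nonneg fun i _ => Finset.sum_nonneg fun j _ =>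
            Finset.sum_nonneg fun β _ => sq_nonneg _
        linarith
      have hmcast : (0:ℝ) ≤ (m:ℝ) := Nat.cast_nonneg m
      nlinarith [hHnn x]
    -- triharmonicity in scalar form
    have e2 : (fun x => lap (lap φ) x α) = fun x => ∑ j, pd j (pd j u) x := by
      exact comp_sum α (lap_contDiff hphi)
    have e3 : (fun x => lap (lap (lap φ)) x α)
        = fun x => ∑ i, pd i (pd i (fun y => ∑ j, pd j (pd j u) y)) x := by
      have h := comp_sum α (lap_contDiff (lap_contDiff hphi))
      rw [h, e2]
    have hbih : ∀ x, ∑ i, pd i (pd i (fun y => ∑ j, pd j (pd j u) y)) x = 0 := by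
      intro x
      have h := congrFun e3 x
      rw [← h, htri x]
      rfl
    obtain ⟨C, hC⟩ := caccioppoli husm hbih hu2 hdu2
    have hw0 : ∀ x, (fun y => ∑ j, pd j (pd j u) y) x = 0 := by
      refine harmonic_liouville hm1
        (ContDiff.sum fun j _ => pd_contDiff j (pd_contDiff j husm)) hbih (C := C) ?_
      intro R hR
      exact hC R hR
    -- u is harmonic and L²; conclude u = 0
    have hL2u : ∀ R : ℝ, 1 ≤ R → ∫ x in Metric.ball (0 : Fin m → ℝ) R, u x ^ 2
        ≤ ∫ x, u x ^ 2 := fun R _ =>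
      setIntegral_le_integral hu2 (Filter.Eventually.of_forall fun x => sq_nonneg _)
    exact harmonic_liouville hm1 husm (fun x => hw0 x) hL2u
  intro x
  funext α
  exact key α x

end Infra
end
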